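/- arXiv:2011.14931 — 4 statements merged into one kernel-verified Lean document; each statement's English description precedes it below -/
import Mathlib

section
/- Given an order-preserving injection θ : [m] ↪ [n] and a subset S of the complement of the image of θ in [n], there exists a unique factorization θ = θ'' ∘ θ' through [m + |S|] such that the image of θ'' : [m+|S|] ↪ [n] equals S ∪ Im(θ). -/
/-!
Since `S` misses `Im θ`, the finset `T = S ∪ Im θ` has `m + |S| + 1` elements, and `θ''` must be
its unique increasing enumeration `[m + |S|] ↪ [n]`. As `Im θ ⊆ Im θ''`, the map `θ` then factors
through the injection `θ''`, and uniquely so.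
-/

namespace OrderEmbedding

variable {α β γ : Type*} [PartialOrder α] [Preorder β] [LE γ]

noncomputable def factorThrough (g : β ↪o γ) (θ : α ↪o γ) (h : Set.range θ ⊆ Set.range g) :
    α ↪o β :=
  ofMapLEIff (fun x => (orderIso (f := g)).symm ⟨θ x, h ⟨x, rfl⟩⟩) fun x y => by
    rw [OrderIso.le_iff_le, Subtype.mk_le_mk]
    exact θ.map_rel_iff

theorem apply_factorThrough (g : β ↪o γ) (θ : α ↪o γ) (h : Set.range θ ⊆ Set.range g) (x : α) :
    g (factorThrough g θ h x) = θ x :=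
  congrArg Subtype.val ((orderIso (f := g)).apply_symm_apply _)

theorem existsUnique_comp_eq_of_range_subset (g : β ↪o γ) (θ : α ↪o γ)
    (h : Set.range θ ⊆ Set.range g) : ∃! f : α ↪o β, ∀ x, g (f x) = θ x :=
  ⟨factorThrough g θ h, apply_factorThrough g θ h, fun _ hf =>
    RelEmbedding.ext fun x => g.injective ((hf x).trans (apply_factorThrough g θ h x).symm)⟩

end OrderEmbedding

theorem Finset.card_union_image_univ {α β : Type*} [Fintype α] [DecidableEq β] {θ : α → β}
    (hθ : Function.Injective θ) {S : Finset β} (hS : ∀ x ∈ S, x ∉ Set.range θ) :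
    (S ∪ univ.image θ).card = S.card + Fintype.card α := by
  rw [card_union_of_disjoint, card_image_of_injective _ hθ, card_univ]
  simpa [disjoint_left] using hS

/-- Given an order-preserving injection `θ : [m] ↪ [n]` and a subset `S` of the complement
of the image of `θ`, there is a unique factorization of `θ` through `[m + |S|]` whose
second factor has image `S ∪ Im θ`. -/
theorem stmt1 (n m : ℕ) (θ : Fin (m + 1) ↪o Fin (n + 1)) (S : Finset (Fin (n + 1)))
    (hS : ∀ x ∈ S, x ∉ Set.range θ) :
    ∃! p : (Fin (m + 1) ↪o Fin (m + S.card + 1)) × (Fin (m + S.card + 1) ↪o Fin (n + 1)),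
      (∀ x, p.2 (p.1 x) = θ x) ∧ Set.range p.2 = ↑S ∪ Set.range θ := by
  set T := S ∪ Finset.univ.image θ
  have hcard : T.card = m + S.card + 1 := by
    rw [Finset.card_union_image_univ θ.injective hS, Fintype.card_fin]
    omega
  have hT : (T : Set (Fin (n + 1))) = ↑S ∪ Set.range θ := by simp [T]
  set g := T.orderEmbOfFin hcard
  have hg : Set.range g = ↑S ∪ Set.range θ := by rw [Finset.range_orderEmbOfFin, hT]
  obtain ⟨f, hf, hf_unique⟩ :=
    g.existsUnique_comp_eq_of_range_subset θ (hg ▸ Set.subset_union_right)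
  refine ⟨(f, g), ⟨hf, hg⟩, ?_⟩
  rintro ⟨f', g'⟩ ⟨hf', hg'⟩
  obtain rfl : g' = g := Finset.orderEmbOfFin_unique' hcard fun x => by
    rw [← Finset.mem_coe, hT, ← hg']
    exact Set.mem_range_self x
  rw [hf_unique f' hf']
end

section
/- If A ↪ B is a monomorphism of simplicial sets, X is a Kan complex, and a map f : A → X admits an extension to B in the homotopy category of simplicial sets (i.e., there exists g : B → X with g ∘ i homotopic to f), then f admits a strict extension f' : B → X with f' ∘ i = f. -/
/-!
The pushout-product of the monomorphism `i : A ⟶ B` with the anodyne vertex inclusion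
`Λ[1, 0] ⟶ Δ[1]` is anodyne. A homotopy `A ⊗ Δ[1] ⟶ X` starting at `i ≫ g`, glued with `g`
on `B ⊗ Λ[1, 0]`, is a map out of that pushout, so it extends over `B ⊗ Δ[1]` because `X` is
a Kan complex. The end of the extended homotopy at the vertex `1` is the strict extension of `f`.
-/

open CategoryTheory Simplicial Limits

/-- The constant map `A ⟶ Δ[1]` at the vertex `k`. -/
def constMap (A : SSet) (k : Fin 2) : A ⟶ Δ[1] where
  app m := TypeCat.ofHom fun _ => SSet.stdSimplex.const 1 k m
  naturality := by intro m m' φ; ext a; rfl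

/-- Simplicial homotopy of maps `A ⟶ X`, via the cylinder `A × Δ[1]`. -/
def SHomotopic {A X : SSet} (f g : A ⟶ X) : Prop :=
  ∃ H : Limits.prod A Δ[1] ⟶ X,
    Limits.prod.lift (𝟙 A) (constMap A 0) ≫ H = f ∧
      Limits.prod.lift (𝟙 A) (constMap A 1) ≫ H = g

open MonoidalCategory CartesianMonoidalCategory HomotopicalAlgebra SSet.modelCategoryQuillen

lemma CategoryTheory.CartesianMonoidalCategory.prod_lift_eq_lift_comp {C : Type*} [Category C]
    [CartesianMonoidalCategory C] {A Y Z : C} [HasBinaryProduct Y Z] (u : A ⟶ Y) (v : A ⟶ Z) :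
    prod.lift u v = lift u v ≫ prod.lift (fst Y Z) (snd Y Z) := by
  ext1 <;> simp

@[simp]
lemma comp_constMap {A A' : SSet} (f : A ⟶ A') (k : Fin 2) :
    f ≫ constMap A' k = constMap A k :=
  rfl

lemma comp_lift_constMap {A B : SSet} (i : A ⟶ B) (k : Fin 2) :
    i ≫ lift (𝟙 B) (constMap B k) = lift (𝟙 A) (constMap A k) ≫ i ▷ Δ[1] := by
  ext1 <;> simp

lemma whiskerLeft_constMap (A K : SSet) (k : Fin 2) :
    A ◁ constMap K k = fst A K ≫ lift (𝟙 A) (constMap A k) := by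
  ext1 <;> simp

lemma horn_one_zero_ι : Λ[1, 0].ι = constMap Λ[1, 0] 0 := by
  ext ⟨⟨d⟩⟩ ⟨x, hx⟩ k : 5
  obtain ⟨j, hj, hjx⟩ := (SSet.mem_horn_iff_notMem_range x 0).1 hx
  obtain rfl := Fin.eq_one_of_ne_zero j hj
  change x k = 0
  by_contra hk
  exact hjx ⟨k, Fin.eq_one_of_ne_zero _ hk⟩

namespace SSet

lemma anodyneExtensions.exists_extension {K L X : SSet} {j : K ⟶ L}
    (hj : anodyneExtensions j) [KanComplex X] (φ : K ⟶ X) : ∃ ψ : L ⟶ X, j ≫ ψ = φ := by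
  have := hj _ (mem_fibrations (terminal.from X))
  let sq : CommSq φ j (terminal.from X) (terminal.from L) := ⟨by simp⟩
  exact ⟨sq.lift, sq.fac_left⟩

lemma exists_homotopy_extension {A B X : SSet} (i : A ⟶ B) [Mono i] [KanComplex X]
    (H : A ⊗ Δ[1] ⟶ X) (g : B ⟶ X) (hH : lift (𝟙 A) (constMap A 0) ≫ H = i ≫ g) :
    ∃ L : B ⊗ Δ[1] ⟶ X, i ▷ Δ[1] ≫ L = H := by
  let sq := Functor.PushoutObjObj.ofHasPushout (curriedTensor SSet) i Λ[1, 0].ι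
  have hsq : anodyneExtensions sq.ι :=
    anodyneExtensions_pushoutObjObjι sq (anodyneExtensions.horn_ι 0)
  obtain ⟨L, hL⟩ := hsq.exists_extension (sq.isPushout.desc (fst B _ ≫ g) H (by
    dsimp
    rw [horn_one_zero_ι, whiskerLeft_constMap, Category.assoc, hH, whiskerRight_fst_assoc]))
  exact ⟨L, by simpa using sq.inr ≫= hL⟩

end SSet

/-- If `i : A ↪ B` is a monomorphism of simplicial sets, `X` is a Kan complex, and
`f : A ⟶ X` extends over `B` up to homotopy (there is `g : B ⟶ X` with `g ∘ i ≃ f`),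
then `f` extends strictly: there is `f' : B ⟶ X` with `f' ∘ i = f`. -/
theorem stmt8 (A B X : SSet) (i : A ⟶ B) [Mono i] [SSet.KanComplex X] (f : A ⟶ X)
    (g : B ⟶ X) (h : SHomotopic (i ≫ g) f) :
    ∃ f' : B ⟶ X, i ≫ f' = f := by
  obtain ⟨H, hH₀, hH₁⟩ := h
  rw [prod_lift_eq_lift_comp, Category.assoc] at hH₀ hH₁
  obtain ⟨L, hL⟩ := SSet.exists_homotopy_extension i _ g hH₀
  refine ⟨lift (𝟙 B) (constMap B 1) ≫ L, ?_⟩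
  rw [← Category.assoc, comp_lift_constMap, Category.assoc, hL, hH₁]
end

section
/- For a pointed simplicial space D, the Moore cycles, chains, and boundary maps fit into a homotopy fiber sequence Z_n(D) → C_n(D) → Z_{n−1}(D), induced by the cofiber sequence Δ^{n−1}/∂Δ^{n−1} → Δⁿ/Λⁿ₀ → Δⁿ/∂Δⁿ of pointed simplicial sets, provided D is Reedy fibrant. -/
/-!
The boundary map `d₀ : C_{n+1}(D) → Z_n(D)` is the base change of the matching map
`D_{n+1} → M_{n+1} D` along `Z_n(D) → M_{n+1} D`, `z ↦ (z, *, …, *)`; Reedy fibrancy makes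
the matching map a Serre fibration, and base change along an injection preserves this. The
fibre over the basepoint consists of the chains whose `0`-th face is also the basepoint,
which are exactly the cycles `Z_{n+1}(D)`.
-/

open CategoryTheory Simplicial unitInterval

/-- A map of topological spaces is a Serre fibration if it has the homotopy lifting
property with respect to all cubes. -/
def IsSerreFib {E B : Type} [TopologicalSpace E] [TopologicalSpace B] (p : E → B) : Prop :=
  ∀ (k : ℕ) (H : C((Fin k → I) × I, B)) (f : C(Fin k → I, E)),
    (∀ c, p (f c) = H (c, 0)) →
    ∃ F : C((Fin k → I) × I, E), (∀ c, F (c, 0) = f c) ∧ ∀ q, p (F q) = H q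

/-- A pointed simplicial space `D` is Reedy fibrant if each map from `D_n` to the `n`-th
matching object (the space of compatible families of prospective faces) is a Serre
fibration, expressed by the homotopy lifting property against matching families. -/
def ReedyFib (D : SimplicialObject TopCat) : Prop :=
  IsSerreFib (fun x : D _⦋1⦌ => (D.δ 0 x, D.δ 1 x)) ∧
  ∀ (n k : ℕ) (H : C((Fin k → I) × I, Fin (n + 3) → D _⦋n + 1⦌)),
    (∀ (q : (Fin k → I) × I) (i j : Fin (n + 3)) (hij : (i : ℕ) < (j : ℕ)),
      D.δ (⟨(i : ℕ), by omega⟩ : Fin (n + 2)) (H q j) =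
        D.δ (⟨(j : ℕ) - 1, by omega⟩ : Fin (n + 2)) (H q i)) →
    ∀ f : C(Fin k → I, D _⦋n + 2⦌),
      (∀ c (i : Fin (n + 3)), D.δ i (f c) = H (c, 0) i) →
      ∃ F : C((Fin k → I) × I, D _⦋n + 2⦌),
        (∀ c, F (c, 0) = f c) ∧ ∀ q (i : Fin (n + 3)), D.δ i (F q) = H q i

/-- The Moore chains subspace `C_{n+1}(D) = D[Δ^{n+1}/Λ^{n+1}₀]`: simplices all of whose
faces except the `0`-th are at the basepoint. -/
def chains (D : SimplicialObject TopCat) (pt : ∀ m : SimplexCategoryᵒᵖ, D.obj m)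
    (n : ℕ) : Set (D _⦋n + 1⦌) :=
  {x | ∀ i : Fin (n + 2), 0 < (i : ℕ) →
    D.δ i x = pt (Opposite.op (SimplexCategory.mk n))}

/-- The Moore cycles subspace `Z_m(D) = D[Δ^m/∂Δ^m]`: simplices all of whose faces are at
the basepoint. -/
def cycles (D : SimplicialObject TopCat) (pt : ∀ m : SimplexCategoryᵒᵖ, D.obj m) :
    (m : ℕ) → Set (D _⦋m⦌) := fun x => match x with
  | 0 => Set.univ
  | m + 1 => {x | ∀ i : Fin (m + 2), D.δ i x = pt (Opposite.op (SimplexCategory.mk m))}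

/-- `q` is the base change of `p` along `g`, with `s = p ⁻¹' range g`. -/
theorem IsSerreFib.of_injective_comp {E B B' : Type} [TopologicalSpace E] [TopologicalSpace B]
    [TopologicalSpace B'] {p : E → B} (hp : IsSerreFib p) {g : B' → B} (hg : Continuous g)
    (hg_inj : Function.Injective g) {s : Set E} {q : s → B'} (hq : ∀ e, g (q e) = p e)
    (hs : ∀ e b, p e = g b → e ∈ s) : IsSerreFib q := by
  intro k H f hf
  obtain ⟨F, hF0, hFH⟩ := hp k (.comp ⟨g, hg⟩ H) (.comp ⟨Subtype.val, continuous_subtype_val⟩ f)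
    fun c => by simp [← hq, hf]
  refine ⟨⟨fun x => ⟨F x, hs _ _ (hFH x)⟩, by fun_prop⟩, fun c => Subtype.ext (hF0 c),
    fun x => hg_inj ?_⟩
  simpa [hq] using hFH x

theorem SimplicialObject.δ_comp_δ_apply {C : Type*} [Category C] {FC : C → C → Type*}
    {CC : C → Type*} [∀ X Y, FunLike (FC X Y) (CC X) (CC Y)] [ConcreteCategory C FC]
    (X : SimplicialObject C) {n : ℕ} {i j : Fin (n + 2)} (hij : i ≤ j)
    (x : ToType (X _⦋n + 2⦌)) : X.δ i (X.δ j.succ x) = X.δ j (X.δ i.castSucc x) := by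
  simpa using congrArg (fun f : X _⦋n + 2⦌ ⟶ X _⦋n⦌ => f x) (X.δ_comp_δ hij)

section Simplicial

variable (D : SimplicialObject TopCat)

/-- The matching object `M_{n+2} D`. -/
def matchingObject (n : ℕ) : Set (Fin (n + 3) → D _⦋n + 1⦌) :=
  {h | ∀ (i j : Fin (n + 3)) (hij : (i : ℕ) < (j : ℕ)),
    D.δ (⟨(i : ℕ), by omega⟩ : Fin (n + 2)) (h j) =
      D.δ (⟨(j : ℕ) - 1, by omega⟩ : Fin (n + 2)) (h i)}

theorem faces_mem_matchingObject {n : ℕ} (x : D _⦋n + 2⦌) :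
    (fun i => D.δ i x) ∈ matchingObject D n := by
  intro i j hij
  have hδδ := SimplicialObject.δ_comp_δ_apply D (i := ⟨i, by omega⟩) (j := ⟨j - 1, by omega⟩)
    (Fin.mk_le_mk.mpr (by omega)) x
  convert hδδ using 3 <;> ext <;> simp only [Fin.succ_mk, Fin.castSucc_mk]; omega

theorem ReedyFib.isSerreFib_faces (hD : ReedyFib D) (n : ℕ) :
    IsSerreFib fun x : D _⦋n + 2⦌ =>
      (⟨_, faces_mem_matchingObject D x⟩ : matchingObject D n) := by
  intro k H f hf
  obtain ⟨F, hF0, hFH⟩ := hD.2 n k (.comp ⟨Subtype.val, continuous_subtype_val⟩ H)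
    (fun q => (H q).2) f fun c i => by simp [← hf]
  exact ⟨F, hF0, fun q => Subtype.ext (funext (hFH q))⟩

section Pointed

variable (pt : ∀ m : SimplexCategoryᵒᵖ, D.obj m)

theorem mem_cycles_succ_iff {n : ℕ} {x : D _⦋n + 1⦌} :
    x ∈ cycles D pt (n + 1) ↔
      x ∈ chains D pt n ∧ D.δ 0 x = pt (Opposite.op (SimplexCategory.mk n)) := by
  refine ⟨fun hx => ⟨fun i _ => hx i, hx 0⟩, fun ⟨hx, hx0⟩ i => ?_⟩
  rcases Fin.eq_zero_or_eq_succ i with rfl | ⟨i, rfl⟩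
  · exact hx0
  · exact hx _ i.succ_pos

theorem ReedyFib.isSerreFib_restrict_δ_zero_chains_zero (hD : ReedyFib D)
    (h : Set.MapsTo (fun x => D.δ 0 x) (chains D pt 0) (cycles D pt 0)) :
    IsSerreFib h.restrict := by
  refine hD.1.of_injective_comp (g := fun z => (z.1, pt (Opposite.op (SimplexCategory.mk 0))))
    (by fun_prop) (fun z z' hzz' => Subtype.ext (Prod.ext_iff.mp hzz').1) (fun x => ?_) ?_
  · exact Prod.ext rfl (x.2 1 Nat.one_pos).symm
  · intro x z hxz i hi
    obtain rfl : i = 1 := Fin.ext (by simp only [Fin.val_one]; omega)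
    exact (Prod.ext_iff.mp hxz).2

variable (hpt : ∀ {m m' : SimplexCategoryᵒᵖ} (φ : m ⟶ m'), D.map φ (pt m) = pt m')
include hpt

theorem mapsTo_δ_zero_chains_cycles (n : ℕ) :
    Set.MapsTo (fun x => D.δ 0 x) (chains D pt n) (cycles D pt n) := by
  intro x hx
  cases n with
  | zero => trivial
  | succ n =>
    intro i
    have hδδ := SimplicialObject.δ_comp_δ_apply D (Fin.zero_le i) x
    rw [Fin.castSucc_zero] at hδδ
    simp only [← hδδ, hx _ i.succ_pos]
    exact hpt _

theorem update_zero_mem_matchingObject {n : ℕ} {z : D _⦋n + 1⦌}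
    (hz : z ∈ cycles D pt (n + 1)) :
    Function.update (fun _ => pt (Opposite.op (SimplexCategory.mk (n + 1)))) 0 z ∈
      matchingObject D n := by
  have hδpt (i : Fin (n + 2)) : D.δ i (pt (Opposite.op (SimplexCategory.mk (n + 1)))) =
      pt (Opposite.op (SimplexCategory.mk n)) := hpt _
  intro i j hij
  obtain hj : j ≠ 0 := fun h => by simp [h] at hij
  rcases eq_or_ne i 0 with rfl | hi
  · simp only [Function.update_self, Function.update_of_ne hj]
    rw [hz, hδpt]
  · simp only [Function.update_of_ne hi, Function.update_of_ne hj, hδpt]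

theorem ReedyFib.isSerreFib_restrict_δ_zero_chains_succ (hD : ReedyFib D) (n : ℕ)
    (h : Set.MapsTo (fun x => D.δ 0 x) (chains D pt (n + 1)) (cycles D pt (n + 1))) :
    IsSerreFib h.restrict := by
  refine (ReedyFib.isSerreFib_faces D hD n).of_injective_comp
    (g := fun z => ⟨_, update_zero_mem_matchingObject D pt hpt z.2⟩) ?_ ?_ ?_ ?_
  · exact Continuous.subtype_mk (by fun_prop) _
  · intro z z' hzz'
    exact Subtype.ext (by simpa using congrArg (fun h => h.1 0) hzz')
  · intro x
    refine Subtype.ext (funext fun i => ?_)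
    rcases eq_or_ne i 0 with rfl | hi
    · simp
    · simp [Function.update_of_ne hi, x.2 i (Fin.pos_iff_ne_zero.mpr hi)]
  · intro x z hxz i hi
    simpa [Function.update_of_ne (Fin.pos_iff_ne_zero.mp hi)] using
      congrArg (fun h => h.1 i) hxz

end Pointed

end Simplicial

/-- For a Reedy fibrant pointed simplicial space `D`, the Moore cycles, chains and
boundary maps form a homotopy fiber sequence `Z_{n+1}(D) → C_{n+1}(D) → Z_n(D)` (induced
by the cofiber sequence `Δ^n/∂Δ^n → Δ^{n+1}/Λ^{n+1}₀ → Δ^{n+1}/∂Δ^{n+1}`): the boundary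
map `∂ = d₀` carries `C_{n+1}(D)` into `Z_n(D)`, the restricted map is a (Serre)
fibration, and its fiber over the basepoint is exactly `Z_{n+1}(D)`. -/
theorem stmt16 (D : SimplicialObject TopCat)
    (pt : ∀ m : SimplexCategoryᵒᵖ, D.obj m)
    (hpt : ∀ {m m' : SimplexCategoryᵒᵖ} (φ : m ⟶ m'), D.map φ (pt m) = pt m')
    (hreedy : ReedyFib D) (n : ℕ) :
    ∃ hmapsto : Set.MapsTo (fun x => D.δ 0 x) (chains D pt n) (cycles D pt n),
      IsSerreFib hmapsto.restrict ∧
      ∀ x : D _⦋n + 1⦌,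
        (x ∈ chains D pt n ∧ D.δ 0 x = pt (Opposite.op (SimplexCategory.mk n))) ↔
          x ∈ cycles D pt (n + 1) := by
  refine ⟨mapsTo_δ_zero_chains_cycles D pt hpt n, ?_, fun x => (mem_cycles_succ_iff D pt).symm⟩
  cases n with
  | zero => exact ReedyFib.isSerreFib_restrict_δ_zero_chains_zero D pt hreedy _
  | succ n => exact ReedyFib.isSerreFib_restrict_δ_zero_chains_succ D pt hpt hreedy n _
end

section
/- The inclusion Δ¹ ∪_{Δ⁰} Δ^{n+1} → Δ^{n+2} is inner anodyne, where Δ^{n+2} is identified with the join Δ¹ ⋆ Δⁿ and the pushout glues the edge Δ¹ = Δ¹ ⋆ ∅ to the cone Δ^{n+1} = Δ⁰ ⋆ Δⁿ along their common vertex Δ⁰. -/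
/-!
Let `A = face {0, 1} ∪ face {0}ᶜ ⊆ Δ[n + 2]`. Since `face {0, 1} ∩ face {0}ᶜ = face {1}`, the
bicartesian square of subcomplexes identifies the pushout `Δ[1] ∪_{Δ[0]} Δ[n + 1]` with `A`,
so it suffices to show that `A ⊆ Δ[n + 2]` is inner anodyne, which we do with Moss's criterion:
a regular inner pairing of the nondegenerate simplices outside `A`.

A face of `Δ[n + 2]` lies outside `A` iff its vertex set contains `0` and some vertex `≥ 2`, so it
is `{0} ∪ T` or `{0, 1} ∪ T` for a nonempty `T ⊆ {2, …, n + 2}`. Pairing the two, `{0} ∪ T` is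
the face of `{0, 1} ∪ T` opposite its vertex number `1`, which is neither the first nor the last
one: only inner horns are attached. If `{0} ∪ S` is a face of `{0, 1} ∪ T` then `S ⊆ T`, so the
ancestry relation strictly increases `|T|` and is well founded.
-/

open CategoryTheory Simplicial Limits

/-- A map of simplicial sets is an inner fibration if it has the right lifting property
with respect to all inner horn inclusions. -/
def InnerFibration {X Y : SSet} (p : X ⟶ Y) : Prop :=
  ∀ (n : ℕ) (i : Fin (n + 1)), 0 < (i : ℕ) → (i : ℕ) < n →
    HasLiftingProperty ((SSet.horn n i).ι) p

/-- A map of simplicial sets is inner anodyne if it lies in the saturation of the inner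
horn inclusions, equivalently (by the small object argument) if it has the left lifting
property with respect to all inner fibrations. -/
def InnerAnodyne {A B : SSet} (f : A ⟶ B) : Prop :=
  ∀ ⦃X Y : SSet⦄ (p : X ⟶ Y), InnerFibration p → HasLiftingProperty f p

/-- The vertex `1` of `Δ[1]`. -/
def v₁ : (Δ[0] : SSet) ⟶ Δ[1] :=
  SSet.stdSimplex.map (SimplexCategory.const (SimplexCategory.mk 0) (SimplexCategory.mk 1) 1)

/-- The cone point (vertex `0`) of `Δ[n+1] = Δ⁰ ⋆ Δⁿ`. -/
def v₀ (n : ℕ) : (Δ[0] : SSet) ⟶ Δ[n + 1] :=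
  SSet.stdSimplex.map
    (SimplexCategory.const (SimplexCategory.mk 0) (SimplexCategory.mk (n + 1)) 0)

/-- The initial edge `{0,1}` of `Δ[n+2] = Δ¹ ⋆ Δⁿ`. -/
def initialEdge (n : ℕ) : (Δ[1] : SSet) ⟶ Δ[n + 2] :=
  SSet.stdSimplex.map
    (SimplexCategory.mkHom ⟨Fin.castLE (by omega), fun _ _ h => h⟩)

/-- The face `{1,…,n+2}` of `Δ[n+2] = Δ¹ ⋆ Δⁿ`, i.e. the cone `Δ⁰ ⋆ Δⁿ`. -/
def coneFace (n : ℕ) : (Δ[n + 1] : SSet) ⟶ Δ[n + 2] :=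
  SSet.stdSimplex.map (SimplexCategory.δ 0)

lemma square_comm (n : ℕ) : v₁ ≫ initialEdge n = v₀ n ≫ coneFace n := by
  dsimp only [v₁, initialEdge, v₀, coneFace]
  rw [← (SSet.stdSimplex : SimplexCategory ⥤ SSet).map_comp,
    ← (SSet.stdSimplex : SimplexCategory ⥤ SSet).map_comp]
  congr 1

universe u

lemma Fin.apply_one_eq_one_of_strictMono {d n : ℕ} {f : Fin (d + 2) → Fin (n + 2)}
    (hf : StrictMono f) (h0 : 0 ∈ Set.range f) (h1 : 1 ∈ Set.range f) : f 1 = 1 := by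
  obtain ⟨i, hi⟩ := h0
  obtain ⟨j, hj⟩ := h1
  have hf0 : f 0 = 0 := le_antisymm (hi ▸ hf.monotone (Fin.zero_le i)) (Fin.zero_le _)
  have hj0 : j ≠ 0 := by rintro rfl; simp [hf0] at hj
  have hle : f 1 ≤ 1 := hj ▸ hf.monotone (Fin.one_le_of_ne_zero hj0)
  have hpos : 0 < f 1 := hf0 ▸ hf Fin.zero_lt_one
  exact le_antisymm hle (Fin.one_le_of_ne_zero hpos.ne')

lemma Finset.erase_erase_insert_insert {α : Type*} [DecidableEq α] {a b : α} {s : Finset α}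
    (hab : a ≠ b) (ha : a ∉ s) (hb : b ∉ s) : ((insert a (insert b s)).erase a).erase b = s := by
  rw [Finset.erase_insert (by simp [hab, ha]), Finset.erase_insert hb]

namespace SSet.stdSimplex

section vertexSet

variable {n : ℕ}

def vertexSet {d : ℕ} (x : Δ[n] _⦋d⦌) : Finset (Fin (n + 1)) := Finset.univ.image x

lemma mem_vertexSet {d : ℕ} (x : (Δ[n] : SSet.{u}) _⦋d⦌) (j : Fin (n + 1)) :
    j ∈ vertexSet x ↔ ∃ i, x i = j := by
  simp [vertexSet]

lemma mem_face_iff_vertexSet_subset (F : Finset (Fin (n + 1))) {d : ℕ}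
    (x : (Δ[n] : SSet.{u}) _⦋d⦌) : x ∈ (face F).obj _ ↔ vertexSet x ⊆ F := by
  simp [mem_face_iff, vertexSet, Finset.image_subset_iff]

lemma vertexSet_nonDegenerateEquiv'_symm {d : ℕ} (F : Finset (Fin (n + 1)))
    (hF : F.card = d + 1) : vertexSet (nonDegenerateEquiv'.{u}.symm ⟨F, hF⟩).val = F := by
  ext j
  rw [mem_vertexSet, ← nonDegenerateEquiv'_iff, Equiv.apply_symm_apply]

lemma ofSimplex_eq_face_vertexSet {d : ℕ} {x : (Δ[n] : SSet.{u}) _⦋d⦌}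
    (hx : x ∈ Δ[n].nonDegenerate d) : Subcomplex.ofSimplex x = face (vertexSet x) :=
  (face_nonDegenerateEquiv' ⟨x, hx⟩).symm

lemma face_injective : Function.Injective (face.{u} (n := n)) := fun _ _ h =>
  le_antisymm ((face_le_face_iff _ _).1 h.le) ((face_le_face_iff _ _).1 h.ge)

lemma sMk_eq_sMk_iff {d e : ℕ} {x : (Δ[n] : SSet.{u}) _⦋d⦌} {y : (Δ[n] : SSet.{u}) _⦋e⦌}
    (hx : x ∈ Δ[n].nonDegenerate d) (hy : y ∈ Δ[n].nonDegenerate e) :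
    S.mk x = S.mk y ↔ vertexSet x = vertexSet y := by
  rw [S.eq_iff_ofSimplex_eq x y hx hy, ofSimplex_eq_face_vertexSet hx,
    ofSimplex_eq_face_vertexSet hy, face_injective.eq_iff]

lemma le_iff_vertexSet_subset {x y : (Δ[n] : SSet.{u}).N} :
    x ≤ y ↔ vertexSet x.simplex ⊆ vertexSet y.simplex := by
  rw [N.le_iff, S.subcomplex, S.subcomplex, ofSimplex_eq_face_vertexSet x.nonDegenerate,
    ofSimplex_eq_face_vertexSet y.nonDegenerate, face_le_face_iff]

lemma vertexSet_δ {d : ℕ} {x : (Δ[n] : SSet.{u}) _⦋d + 1⦌}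
    (hx : x ∈ Δ[n].nonDegenerate (d + 1)) (i : Fin (d + 2)) :
    vertexSet (Δ[n].δ i x) = (vertexSet x).erase (x i) := by
  have hinj := ((mem_nonDegenerate_iff_strictMono x).1 hx).injective
  ext j
  simp only [mem_vertexSet, Finset.mem_erase, δ_apply]
  constructor
  · rintro ⟨k, rfl⟩
    exact ⟨fun h => Fin.succAbove_ne i k (hinj h), _, rfl⟩
  · rintro ⟨hj, k, rfl⟩
    obtain ⟨l, rfl⟩ := Fin.exists_succAbove_eq (x := k) (y := i) (fun h => hj (congrArg x h))
    exact ⟨l, rfl⟩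

end vertexSet

variable (n : ℕ)

def edgeUnionCone : (Δ[n + 2] : SSet.{u}).Subcomplex := face {0, 1} ⊔ face {0}ᶜ

variable {n}

lemma mem_edgeUnionCone_iff {d : ℕ} (x : (Δ[n + 2] : SSet.{u}) _⦋d⦌) :
    x ∈ (edgeUnionCone n).obj _ ↔ vertexSet x ⊆ {0, 1} ∨ 0 ∉ vertexSet x := by
  simp only [edgeUnionCone, Subfunctor.max_obj, Set.mem_union, mem_face_iff_vertexSet_subset,
    Finset.subset_compl_singleton]

noncomputable def edgeJoin (T : Finset (Fin (n + 3))) (h0 : 0 ∉ T) (h1 : 1 ∉ T) :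
    (Δ[n + 2] : SSet.{u}) _⦋T.card + 1⦌ :=
  (nonDegenerateEquiv'.symm ⟨insert 0 (insert 1 T), by
    simp [Finset.card_insert_of_notMem, h0, h1]⟩).val

section edgeJoin

variable (T : Finset (Fin (n + 3))) (h0 : 0 ∉ T) (h1 : 1 ∉ T)

lemma edgeJoin_mem_nonDegenerate : edgeJoin.{u} T h0 h1 ∈ Δ[n + 2].nonDegenerate _ :=
  (nonDegenerateEquiv'.symm _).prop

lemma vertexSet_edgeJoin : vertexSet (edgeJoin.{u} T h0 h1) = insert 0 (insert 1 T) :=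
  vertexSet_nonDegenerateEquiv'_symm _ _

lemma edgeJoin_one : edgeJoin.{u} T h0 h1 1 = 1 := by
  have hmem (j : Fin (n + 3)) (hj : j ∈ insert 0 (insert 1 T)) :
      j ∈ Set.range (edgeJoin.{u} T h0 h1) := by
    rwa [← vertexSet_edgeJoin T h0 h1, mem_vertexSet] at hj
  exact Fin.apply_one_eq_one_of_strictMono
    ((mem_nonDegenerate_iff_strictMono _).1 (edgeJoin_mem_nonDegenerate T h0 h1))
    (hmem 0 (by simp)) (hmem 1 (by simp))

lemma vertexSet_δ_one_edgeJoin :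
    vertexSet (Δ[n + 2].δ 1 (edgeJoin.{u} T h0 h1)) = insert 0 T := by
  rw [vertexSet_δ (edgeJoin_mem_nonDegenerate T h0 h1), edgeJoin_one, vertexSet_edgeJoin,
    Finset.erase_insert_of_ne (by simp), Finset.erase_insert h1]

end edgeJoin

lemma notMem_edgeUnionCone {d : ℕ} {x : (Δ[n + 2] : SSet.{u}) _⦋d⦌} {T : Finset (Fin (n + 3))}
    (hT : T.Nonempty) (h0 : 0 ∉ T) (h1 : 1 ∉ T) (hx : insert 0 T ⊆ vertexSet x) :
    x ∉ (edgeUnionCone n).obj _ := by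
  obtain ⟨t, ht⟩ := hT
  rw [mem_edgeUnionCone_iff]
  rintro (h | h)
  · have := h (hx (Finset.mem_insert_of_mem ht))
    simp only [Finset.mem_insert, Finset.mem_singleton] at this
    rcases this with rfl | rfl
    exacts [h0 ht, h1 ht]
  · exact h (hx (Finset.mem_insert_self _ _))

lemma exists_vertexSet_eq_of_notMem_edgeUnionCone {d : ℕ} {x : (Δ[n + 2] : SSet.{u}) _⦋d⦌}
    (hx : x ∉ (edgeUnionCone n).obj _) :
    ∃ T : Finset (Fin (n + 3)), T.Nonempty ∧ 0 ∉ T ∧ 1 ∉ T ∧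
      (vertexSet x = insert 0 (insert 1 T) ∨ vertexSet x = insert 0 T) := by
  rw [mem_edgeUnionCone_iff, not_or, not_not] at hx
  obtain ⟨hU01, h0U⟩ := hx
  obtain ⟨t, htU, ht⟩ := Finset.not_subset.mp hU01
  simp only [Finset.mem_insert, Finset.mem_singleton, not_or] at ht
  refine ⟨((vertexSet x).erase 0).erase 1, ⟨t, by simp [ht.1, ht.2, htU]⟩, by simp, by simp, ?_⟩
  by_cases h1U : 1 ∈ vertexSet x
  · left
    rw [Finset.insert_erase (by simp [h1U]), Finset.insert_erase h0U]
  · right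
    rw [Finset.erase_eq_of_notMem (by simp [h1U]), Finset.insert_erase h0U]

noncomputable def edgeUnionConePairingCore (n : ℕ) : (edgeUnionCone.{u} n).PairingCore where
  ι := {T : Finset (Fin (n + 3)) // T.Nonempty ∧ 0 ∉ T ∧ 1 ∉ T}
  dim T := T.1.card
  simplex T := edgeJoin T.1 T.2.2.1 T.2.2.2
  index _ := 1
  nonDegenerate₁ T := edgeJoin_mem_nonDegenerate _ _ _
  nonDegenerate₂ T := nonDegenerate_δ (edgeJoin_mem_nonDegenerate _ _ _) _
  notMem₁ T := notMem_edgeUnionCone T.2.1 T.2.2.1 T.2.2.2 (by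
    rw [vertexSet_edgeJoin]
    exact Finset.insert_subset_insert _ (Finset.subset_insert _ _))
  notMem₂ T := notMem_edgeUnionCone T.2.1 T.2.2.1 T.2.2.2 (by rw [vertexSet_δ_one_edgeJoin])
  injective_type₁' {s t} h := by
    rw [sMk_eq_sMk_iff (edgeJoin_mem_nonDegenerate _ _ _) (edgeJoin_mem_nonDegenerate _ _ _),
      vertexSet_edgeJoin, vertexSet_edgeJoin] at h
    apply Subtype.ext
    rw [← Finset.erase_erase_insert_insert zero_ne_one s.2.2.1 s.2.2.2, h,
      Finset.erase_erase_insert_insert zero_ne_one t.2.2.1 t.2.2.2]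
  injective_type₂' {s t} h := by
    rw [sMk_eq_sMk_iff (nonDegenerate_δ (edgeJoin_mem_nonDegenerate _ _ _) _)
      (nonDegenerate_δ (edgeJoin_mem_nonDegenerate _ _ _) _),
      vertexSet_δ_one_edgeJoin, vertexSet_δ_one_edgeJoin] at h
    apply Subtype.ext
    rw [← Finset.erase_insert s.2.2.1, h, Finset.erase_insert t.2.2.1]
  type₁_ne_type₂' s t h := by
    rw [sMk_eq_sMk_iff (edgeJoin_mem_nonDegenerate _ _ _)
      (nonDegenerate_δ (edgeJoin_mem_nonDegenerate _ _ _) _),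
      vertexSet_edgeJoin, vertexSet_δ_one_edgeJoin] at h
    have h1 : (1 : Fin (n + 3)) ∈ insert 0 t.1 := h ▸ by simp
    simp [t.2.2.2] at h1
  surjective' x := by
    obtain ⟨T, hT, h0, h1, hx | hx⟩ := exists_vertexSet_eq_of_notMem_edgeUnionCone x.notMem
    · refine ⟨⟨T, hT, h0, h1⟩, Or.inl ?_⟩
      exact (sMk_eq_sMk_iff x.nonDegenerate (edgeJoin_mem_nonDegenerate _ _ _)).2
        (hx.trans (vertexSet_edgeJoin _ _ _).symm)
    · refine ⟨⟨T, hT, h0, h1⟩, Or.inr ?_⟩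
      exact (sMk_eq_sMk_iff x.nonDegenerate
        (nonDegenerate_δ (edgeJoin_mem_nonDegenerate _ _ _) _)).2
        (hx.trans (vertexSet_δ_one_edgeJoin _ _ _).symm)

instance : (edgeUnionConePairingCore.{u} n).IsInner where
  ne_zero _ := Fin.one_pos'.ne'
  ne_last T := by simpa [edgeUnionConePairingCore, Fin.ext_iff] using T.2.1.ne_empty

lemma edgeUnionConePairingCore.card_lt_of_ancestralRel
    {s t : (edgeUnionConePairingCore.{u} n).ι}
    (h : (edgeUnionConePairingCore.{u} n).AncestralRel s t) : s.1.card < t.1.card := by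
  obtain ⟨hst, hlt⟩ := h
  have hle := le_iff_vertexSet_subset.1 hlt.le
  change vertexSet (Δ[n + 2].δ 1 (edgeJoin s.1 s.2.2.1 s.2.2.2)) ⊆
    vertexSet (edgeJoin t.1 t.2.2.1 t.2.2.2) at hle
  rw [vertexSet_δ_one_edgeJoin, vertexSet_edgeJoin] at hle
  have hsub : s.1 ⊆ t.1 := fun j hj => by
    have := hle (Finset.mem_insert_of_mem hj)
    simp only [Finset.mem_insert] at this
    rcases this with rfl | rfl | h
    exacts [absurd hj s.2.2.1, absurd hj s.2.2.2, h]
  exact Finset.card_lt_card (Finset.ssubset_iff_subset_ne.2 ⟨hsub, fun h => hst (Subtype.ext h)⟩)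

instance : (edgeUnionConePairingCore.{u} n).IsRegular where
  wf := Subrelation.wf (r := InvImage (· < ·) fun s => s.1.card)
    edgeUnionConePairingCore.card_lt_of_ancestralRel (InvImage.wf _ wellFounded_lt)

lemma innerAnodyneExtensions_edgeUnionCone_ι : innerAnodyneExtensions (edgeUnionCone.{u} n).ι :=
  (edgeUnionConePairingCore n).pairing.innerAnodyneExtensions

lemma face_zero_one_inf_face_compl_zero :
    face.{u} ({0, 1} : Finset (Fin (n + 3))) ⊓ face {0}ᶜ = face {1} := by
  rw [face_inter_face]
  congr 1
  ext j
  simp only [Finset.inf_eq_inter, Finset.mem_inter, Finset.mem_insert, Finset.mem_singleton,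
    Finset.mem_compl]
  constructor
  · rintro ⟨rfl | rfl, h⟩
    exacts [absurd rfl h, rfl]
  · rintro rfl
    exact ⟨Or.inr rfl, by simp⟩

lemma facePairIso_zero_one_hom_ι :
    (facePairIso.{u} (0 : Fin (n + 3)) 1 (by simp)).hom ≫ (face {0, 1}).ι = initialEdge n := by
  apply yonedaEquiv.injective
  ext i
  fin_cases i <;> rfl

lemma faceSingletonIso_one_hom_ι :
    (faceSingletonIso.{u} (1 : Fin (n + 3))).hom ≫ (face {1}).ι = v₁ ≫ initialEdge n := by
  apply yonedaEquiv.injective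
  ext i
  fin_cases i
  rfl

lemma isPushout_edgeUnionCone (n : ℕ) :
    IsPushout v₁ (v₀ n)
      ((facePairIso.{u} (0 : Fin (n + 3)) 1 (by simp)).hom ≫
        Subcomplex.homOfLE (le_sup_left : _ ≤ edgeUnionCone n))
      ((faceSingletonComplIso.{u} (0 : Fin (n + 3))).hom ≫
        Subcomplex.homOfLE (le_sup_right : _ ≤ edgeUnionCone n)) := by
  have sq : Subcomplex.BicartSq (face {1}) (face {0, 1}) (face {0}ᶜ) (edgeUnionCone.{u} n) :=
    ⟨rfl, face_zero_one_inf_face_compl_zero⟩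
  refine sq.isPushout.of_iso' (faceSingletonIso 1) (facePairIso 0 1 (by simp))
    (faceSingletonComplIso 0) (Iso.refl _) ?_ ?_ (Category.comp_id _).symm
    (Category.comp_id _).symm
  · rw [← cancel_mono (face {0, 1}).ι, Category.assoc, Category.assoc, Subcomplex.homOfLE_ι,
      faceSingletonIso_one_hom_ι, facePairIso_zero_one_hom_ι]
  · rw [← cancel_mono (face {0}ᶜ).ι, Category.assoc, Category.assoc, Subcomplex.homOfLE_ι,
      faceSingletonIso_one_hom_ι, faceSingletonComplIso_hom_ι, square_comm]
    rfl

lemma pushout_desc_initialEdge_coneFace (n : ℕ) :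
    pushout.desc (initialEdge.{u} n) (coneFace n) (square_comm n) =
      (isPushout_edgeUnionCone.{u} n).isoPushout.inv ≫ (edgeUnionCone n).ι := by
  apply pushout.hom_ext
  · rw [pushout.inl_desc]
    erw [IsPushout.inl_isoPushout_inv_assoc]
    exact facePairIso_zero_one_hom_ι.symm
  · rw [pushout.inr_desc]
    erw [IsPushout.inr_isoPushout_inv_assoc]
    rfl

end SSet.stdSimplex

lemma InnerAnodyne.of_innerAnodyneExtensions {A B : SSet.{u}} {f : A ⟶ B}
    (hf : SSet.innerAnodyneExtensions f) : InnerAnodyne f :=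
  fun _ _ p hp => hf p (fun _ _ _ ⟨i, h0, hn⟩ => hp _ i h0 hn)

/-- The inclusion `Δ¹ ∪_{Δ⁰} Δ^{n+1} → Δ^{n+2}`, gluing the edge `Δ¹ = Δ¹ ⋆ ∅` to the
cone `Δ^{n+1} = Δ⁰ ⋆ Δⁿ` along the vertex `Δ⁰`, is inner anodyne. -/
theorem stmt18 (n : ℕ) :
    InnerAnodyne (pushout.desc (initialEdge.{u} n) (coneFace n) (square_comm n)) := by
  apply InnerAnodyne.of_innerAnodyneExtensions
  rw [SSet.stdSimplex.pushout_desc_initialEdge_coneFace]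
  exact MorphismProperty.comp_mem _ _ _ (SSet.innerAnodyneExtensions.of_isIso _)
    SSet.stdSimplex.innerAnodyneExtensions_edgeUnionCone_ι
end
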